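/- arXiv:1309.5562 — 2 statements merged into one kernel-verified Lean document; each statement's English description precedes it below -/
import Mathlib

section
/- Let X be a K3 surface and let (ℓ_n) be an infinite sequence of pairwise distinct nodal classes (classes of smooth rational curves) such that the rays R₊ℓ_n converge to the ray R₊ξ for some ξ ∈ NE̅(X). Then ξ·ξ = 0. -/
open Filter Topology

set_option maxHeartbeats 1000000

/-- Let `X` be a K3 surface and `Nd` its set of nodal classes
(classes of smooth rational curves: each has self-intersection `-2`, and two
distinct nodal classes intersect nonnegatively).  If `(ℓ n)` is an infinite
sequence of pairwise distinct nodal classes whose rays `ℝ₊ ℓ n` converge to the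
ray `ℝ₊ ξ` of some `ξ ∈ NE̅(X)` (i.e. `t n • ℓ n → ξ` for some positive scalars
`t n`), then `ξ·ξ = 0`. -/
theorem k3_limits_of_nodal_rays {V : Type*} [NormedAddCommGroup V]
    [NormedSpace ℝ V] [FiniteDimensional ℝ V]
    (b : V →ₗ[ℝ] V →ₗ[ℝ] ℝ) (hsymm : ∀ x y, b x y = b y x)
    (NE Nd : Set V)
    (hNd_self : ∀ ℓ ∈ Nd, b ℓ ℓ = -2)
    (hNd_pair : ∀ ℓ ∈ Nd, ∀ ℓ' ∈ Nd, ℓ ≠ ℓ' → 0 ≤ b ℓ ℓ')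
    (ℓ : ℕ → V) (hmem : ∀ n, ℓ n ∈ Nd) (hinj : Function.Injective ℓ)
    (ξ : V) (hξ : ξ ∈ NE) (t : ℕ → ℝ) (ht : ∀ n, 0 < t n)
    (hconv : Tendsto (fun n => t n • ℓ n) atTop (𝓝 ξ)) :
    b ξ ξ = 0 := by
  -- continuous version of b
  set c : V →L[ℝ] V →L[ℝ] ℝ :=
    LinearMap.toContinuousLinearMap
      ((LinearMap.toContinuousLinearMap : (V →ₗ[ℝ] ℝ) ≃ₗ[ℝ] (V →L[ℝ] ℝ)).toLinearMap ∘ₗ b)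
    with hc
  have hcb : ∀ x y, c x y = b x y := fun x y => rfl
  have hcont : Continuous fun p : V × V => c p.1 p.2 :=
    isBoundedBilinearMap_apply.continuous.comp
      ((c.continuous.comp continuous_fst).prodMk continuous_snd)
  have hdiag : Tendsto (fun n => c (t n • ℓ n) (t n • ℓ n)) atTop (𝓝 (c ξ ξ)) :=
    (hcont.tendsto _).comp (hconv.prodMk_nhds hconv)
  -- upper bound: b ξ ξ ≤ 0
  have hle : b ξ ξ ≤ 0 := by
    have : ∀ n, c (t n • ℓ n) (t n • ℓ n) ≤ 0 := by
      intro n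
      have : c (t n • ℓ n) (t n • ℓ n) = t n * t n * b (ℓ n) (ℓ n) := by
        simp [hcb, mul_assoc]
      rw [this, hNd_self _ (hmem n)]
      nlinarith [(ht n).le, ht n]
    exact le_of_tendsto hdiag (Eventually.of_forall this)
  -- lower bound: b ξ ξ ≥ 0
  have hmix : ∀ m, 0 ≤ c ξ (t m • ℓ m) := by
    intro m
    have hlim : Tendsto (fun n => c (t n • ℓ n) (t m • ℓ m)) atTop
        (𝓝 (c ξ (t m • ℓ m))) :=
      ((hcont.tendsto _).comp (hconv.prodMk_nhds tendsto_const_nhds))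
    refine ge_of_tendsto hlim ?_
    filter_upwards [eventually_ne_atTop m] with n hn
    have hne : ℓ n ≠ ℓ m := fun h => hn (hinj h)
    have hb0 : 0 ≤ b (ℓ n) (ℓ m) := hNd_pair _ (hmem n) _ (hmem m) hne
    have : c (t n • ℓ n) (t m • ℓ m) = t n * (t m * b (ℓ n) (ℓ m)) := by
      simp [hcb]; ring
    rw [this]
    exact mul_nonneg (ht n).le (mul_nonneg (ht m).le hb0)
  have hge : 0 ≤ b ξ ξ := by
    have hlim : Tendsto (fun m => c ξ (t m • ℓ m)) atTop (𝓝 (c ξ ξ)) :=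
      ((c ξ).continuous.tendsto _).comp hconv
    exact ge_of_tendsto hlim (Eventually.of_forall hmix)
  linarith
end

section
/- Let X be a K3 surface, h an ample class, ε > 0, and Q_ε(X) = {ξ ∈ N_1(X) : ξ·h = 1, ξ·ξ ≥ -ε}. Then only finitely many nodal classes ℓ (normalized so that ℓ·h = 1, i.e., considering the rays R₊ℓ) fail to lie in the convex hull of Q_ε(X). -/
/-- Let `X` be a K3 surface, `h` an ample class, `ε > 0`, and
`Q_ε(X) = {ξ | ξ·h = 1, ξ·ξ ≥ -ε}`.  Nodal classes (classes of smooth rational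
curves) have self-intersection `-2`, pair nonnegatively with each other when
distinct, lie in the closed effective cone `NE`, pair positively with `h`, and
form a discrete set (integral classes); the slice `{ξ ∈ NE | ξ·h = 1}` is
compact by Kleiman's criterion.  Then only finitely many nodal classes,
normalized so that `ℓ·h = 1`, fail to lie in the convex hull of `Q_ε(X)`. -/
theorem k3_accumulation_of_nodal_rays {V : Type*} [NormedAddCommGroup V]
    [NormedSpace ℝ V] [FiniteDimensional ℝ V]
    (b : V →ₗ[ℝ] V →ₗ[ℝ] ℝ) (hsymm : ∀ x y, b x y = b y x)
    (NE Nd : Set V) (hNdNE : Nd ⊆ NE)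
    (hcone : ∀ t : ℝ, 0 ≤ t → ∀ x ∈ NE, t • x ∈ NE)
    (hNd_self : ∀ ℓ ∈ Nd, b ℓ ℓ = -2)
    (hNd_pair : ∀ ℓ ∈ Nd, ∀ ℓ' ∈ Nd, ℓ ≠ ℓ' → 0 ≤ b ℓ ℓ')
    (h : V) (hpos : ∀ ℓ ∈ Nd, 0 < b ℓ h)
    (hcompact : IsCompact {ξ ∈ NE | b ξ h = 1})
    (hdisc : ∀ K : Set V, IsCompact K → (Nd ∩ K).Finite)
    (ε : ℝ) (hε : 0 < ε) :
    {ℓ ∈ Nd | (b ℓ h)⁻¹ • ℓ ∉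
        convexHull ℝ {ξ : V | b ξ h = 1 ∧ -ε ≤ b ξ ξ}}.Finite := by
  set C := Real.sqrt (2 / ε) with hCdef
  have hK : IsCompact ((fun p : ℝ × V => p.1 • p.2) ''
      (Set.Icc (0:ℝ) C ×ˢ {ξ ∈ NE | b ξ h = 1})) :=
    (isCompact_Icc.prod hcompact).image (continuous_fst.smul continuous_snd)
  refine Set.Finite.subset (hdisc _ hK) ?_
  rintro ℓ ⟨hℓNd, hbad⟩
  have hposℓ := hpos ℓ hℓNd
  have hne : b ℓ h ≠ 0 := ne_of_gt hposℓ
  have hslice : (b ℓ h)⁻¹ • ℓ ∈ {ξ ∈ NE | b ξ h = 1} := by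
    refine ⟨hcone _ (by positivity) ℓ (hNdNE hℓNd), ?_⟩
    simp [map_smul, smul_eq_mul, inv_mul_cancel₀ hne]
  refine ⟨hℓNd, ⟨(b ℓ h, (b ℓ h)⁻¹ • ℓ), ⟨⟨le_of_lt hposℓ, ?_⟩, hslice⟩,
    smul_inv_smul₀ hne ℓ⟩⟩
  by_contra hgt
  push_neg at hgt
  apply hbad
  apply subset_convexHull
  refine ⟨hslice.2, ?_⟩
  have hbb : b ((b ℓ h)⁻¹ • ℓ) ((b ℓ h)⁻¹ • ℓ)
      = -2 * ((b ℓ h) ^ 2)⁻¹ := by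
    simp only [map_smul, LinearMap.smul_apply, smul_eq_mul, hNd_self ℓ hℓNd]
    field_simp
  rw [hbb]
  have hsq : Real.sqrt (2 / ε) ^ 2 = 2 / ε :=
    Real.sq_sqrt (le_of_lt (div_pos two_pos hε))
  have hCnonneg : 0 ≤ C := Real.sqrt_nonneg _
  have h2 : 2 / ε < (b ℓ h) ^ 2 := by nlinarith
  have hεle : 2 * ((b ℓ h) ^ 2)⁻¹ ≤ ε := by
    rw [div_lt_iff₀ hε] at h2
    have hsqpos : (0:ℝ) < (b ℓ h) ^ 2 := by positivity
    rw [mul_inv_le_iff₀ hsqpos]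
    nlinarith
  linarith
end
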